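/- Let G be a locally compact second countable group, Z a closed central subgroup, p : G → G/Z the quotient map, and s : G/Z → G a Borel section of p which is regular (the image of every compact set is relatively compact) and whose defect set S = {s(xy)(s(x)s(y))⁻¹ : x, y ∈ G/Z} is finite. Assume the quotient group G/Z has property (TTT). For g ∈ G set z_g = g·s(p(g))⁻¹ ∈ Z. If (b, π) is a wq-cocycle on G, then sup_{g ∈ G, z ∈ Z} ‖π(g)b(z) − π(z_g)b(z)‖ < ∞. -/

import Mathlib

noncomputable section

/-- A map is Borel measurable with respect to the Borel σ-algebras of the topologies. -/
def BorelMeasurableMap {X Y : Type*} [TopologicalSpace X] [TopologicalSpace Y] (f : X → Y) : Prop :=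
  @Measurable X Y (borel X) (borel Y) f

/-- `(b, π)` is a wq-cocycle on `G`: `π` is a Borel map into the unitary group of the
complex Hilbert space `H`, `b` is Borel, locally bounded, and has finite defect. -/
structure IsWqCocycle {G : Type*} [Group G] [TopologicalSpace G]
    {H : Type*} [NormedAddCommGroup H] [InnerProductSpace ℂ H] [CompleteSpace H]
    (b : G → H) (π : G → H ≃ₗᵢ[ℂ] H) : Prop where
  borel_b : BorelMeasurableMap b
  borel_pi : ∀ ξ : H, BorelMeasurableMap fun g => π g ξ
  loc_bdd : ∀ K : Set G, IsCompact K → ∃ C : ℝ, ∀ g ∈ K, ‖b g‖ ≤ C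
  defect : ∃ D : ℝ, ∀ g h : G, ‖b (g * h) - b g - π g (b h)‖ ≤ D

/-- Property (TTT): every wq-cocycle is bounded. -/
def HasTTT (G : Type*) [Group G] [TopologicalSpace G] : Prop :=
  ∀ (H : Type) [NormedAddCommGroup H] [InnerProductSpace ℂ H] [CompleteSpace H]
    (b : G → H) (π : G → H ≃ₗᵢ[ℂ] H),
    IsWqCocycle b π → ∃ C : ℝ, ∀ g : G, ‖b g‖ ≤ C

/-!
Let `D` be the defect of `b`. Pulling `(b, π)` back along the section gives a wq-cocycle
`(b ∘ s, π ∘ s)` on `G/Z`: since `s(xy) = s(x) s(y) w` with `w` central and ranging over the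
finite defect set, its defect is at most `2D + max ‖b w‖`. By (TTT), `‖b ∘ s‖ ≤ C` for some `C`,
so `g = z_g · s(p g)` gives `‖b g - b z_g‖ ≤ D + C`. On the other hand, for central `t` the two
ways of expanding `b (g t) = b (t g)` give `π g (b t) ≈ b t + π t (b g) - b g` up to `2D`, so
`π g (b t)` depends, up to a bounded error, only on `b g`.
-/

section Defect

variable {G R H : Type*} [Group G] [Ring R] [SeminormedAddCommGroup H] [Module R H]
  {b : G → H} {π : G → H ≃ₗᵢ[R] H} {D : ℝ}

theorem norm_map_mul_sub_le (hD : ∀ g h, ‖b (g * h) - b g - π g (b h)‖ ≤ D) (g h : G) :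
    ‖b (g * h) - b g‖ ≤ D + ‖b h‖ :=
  calc ‖b (g * h) - b g‖ = ‖(b (g * h) - b g - π g (b h)) + π g (b h)‖ := by
        rw [sub_add_cancel]
    _ ≤ D + ‖b h‖ := (norm_add_le _ _).trans (add_le_add (hD g h) ((π g).norm_map _).le)

theorem norm_map_mul_mul_sub_le (hD : ∀ g h, ‖b (g * h) - b g - π g (b h)‖ ≤ D)
    (g h w : G) : ‖b (g * h * w) - b g - π g (b h)‖ ≤ D + D + ‖b w‖ :=
  calc ‖b (g * h * w) - b g - π g (b h)‖
        = ‖(b (g * h * w) - b (g * h) - π (g * h) (b w)) + π (g * h) (b w)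
            + (b (g * h) - b g - π g (b h))‖ := by congr 1; abel
    _ ≤ D + ‖b w‖ + D := by
        refine (norm_add_le _ _).trans (add_le_add ((norm_add_le _ _).trans ?_) (hD g h))
        exact add_le_add (hD (g * h) w) ((π (g * h)).norm_map _).le
    _ = D + D + ‖b w‖ := by ring

theorem norm_map_central_sub_le (hD : ∀ g h, ‖b (g * h) - b g - π g (b h)‖ ≤ D)
    {t : G} (ht : t ∈ Subgroup.center G) (g : G) :
    ‖π g (b t) - (b t + π t (b g) - b g)‖ ≤ D + D :=
  calc ‖π g (b t) - (b t + π t (b g) - b g)‖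
        = ‖(b (t * g) - b t - π t (b g)) - (b (g * t) - b g - π g (b t))‖ := by
          rw [← Subgroup.mem_center_iff.mp ht g]; congr 1; abel
    _ ≤ D + D := (norm_sub_le _ _).trans (add_le_add (hD t g) (hD g t))

theorem norm_map_central_sub_map_central_le
    (hD : ∀ g h, ‖b (g * h) - b g - π g (b h)‖ ≤ D)
    {t : G} (ht : t ∈ Subgroup.center G) (g g' : G) :
    ‖π g (b t) - π g' (b t)‖ ≤ 4 * D + 2 * ‖b g - b g'‖ := by
  have hπt : ‖π t (b g) - π t (b g')‖ = ‖b g - b g'‖ := by rw [← map_sub, (π t).norm_map]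
  calc ‖π g (b t) - π g' (b t)‖
        = ‖(π g (b t) - (b t + π t (b g) - b g)) - (π g' (b t) - (b t + π t (b g') - b g'))
            + (π t (b g) - π t (b g')) - (b g - b g')‖ := by congr 1; abel
    _ ≤ (D + D) + (D + D) + ‖b g - b g'‖ + ‖b g - b g'‖ := by
        refine (norm_sub_le _ _).trans (add_le_add ((norm_add_le _ _).trans ?_) le_rfl)
        refine add_le_add ((norm_sub_le _ _).trans ?_) hπt.le
        exact add_le_add (norm_map_central_sub_le hD ht g) (norm_map_central_sub_le hD ht g')
    _ = 4 * D + 2 * ‖b g - b g'‖ := by ring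

end Defect

section QuotientSection

variable {G : Type*} [Group G] {Z : Subgroup G} [Z.Normal] {s : G ⧸ Z → G}

theorem section_defect_mem (hs_sect : ∀ x : G ⧸ Z, (QuotientGroup.mk (s x) : G ⧸ Z) = x)
    (x y : G ⧸ Z) : s (x * y) * (s x * s y)⁻¹ ∈ Z := by
  rw [← QuotientGroup.eq_one_iff]
  simp [QuotientGroup.mk_mul, QuotientGroup.mk_inv, hs_sect]

theorem IsWqCocycle.comp_section [TopologicalSpace G] {H : Type*} [NormedAddCommGroup H]
    [InnerProductSpace ℂ H] [CompleteSpace H] {b : G → H} {π : G → H ≃ₗᵢ[ℂ] H} (hb : IsWqCocycle b π)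
    (hcentral : Z ≤ Subgroup.center G) (hs_borel : BorelMeasurableMap s)
    (hs_sect : ∀ x : G ⧸ Z, (QuotientGroup.mk (s x) : G ⧸ Z) = x)
    (hs_reg : ∀ K : Set (G ⧸ Z), IsCompact K → IsCompact (closure (s '' K)))
    (hS : Set.Finite {w : G | ∃ x y : G ⧸ Z, w = s (x * y) * (s x * s y)⁻¹}) :
    IsWqCocycle (fun x => b (s x)) (fun x => π (s x)) where
  borel_b := hb.borel_b.comp hs_borel
  borel_pi ξ := (hb.borel_pi ξ).comp hs_borel
  loc_bdd K hK := by
    obtain ⟨C, hC⟩ := hb.loc_bdd _ (hs_reg K hK)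
    exact ⟨C, fun x hx => hC _ (subset_closure (Set.mem_image_of_mem s hx))⟩
  defect := by
    obtain ⟨D, hD⟩ := hb.defect
    obtain ⟨M, hM⟩ := (hS.image fun w => ‖b w‖).bddAbove
    refine ⟨D + D + M, fun x y => ?_⟩
    have hw : s x * s y * (s (x * y) * (s x * s y)⁻¹) = s (x * y) := by
      rw [Subgroup.mem_center_iff.mp (hcentral (section_defect_mem hs_sect x y)),
        inv_mul_cancel_right]
    set w := s (x * y) * (s x * s y)⁻¹
    calc ‖b (s (x * y)) - b (s x) - π (s x) (b (s y))‖ ≤ D + D + ‖b w‖ := by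
          simpa only [hw] using norm_map_mul_mul_sub_le hD (s x) (s y) w
      _ ≤ D + D + M := by gcongr; exact hM ⟨w, ⟨x, y, rfl⟩, rfl⟩

end QuotientSection

theorem almost_central_action_on_cocycle_general
    (G : Type) [Group G] [TopologicalSpace G]
    (Z : Subgroup G) [Z.Normal] (hcentral : Z ≤ Subgroup.center G)
    (s : G ⧸ Z → G)
    (hs_borel : BorelMeasurableMap s)
    (hs_sect : ∀ x : G ⧸ Z, (QuotientGroup.mk (s x) : G ⧸ Z) = x)
    (hs_reg : ∀ K : Set (G ⧸ Z), IsCompact K → IsCompact (closure (s '' K)))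
    (hS : Set.Finite {w : G | ∃ x y : G ⧸ Z, w = s (x * y) * (s x * s y)⁻¹})
    (hTTT : HasTTT (G ⧸ Z))
    (H : Type) [NormedAddCommGroup H] [InnerProductSpace ℂ H] [CompleteSpace H]
    (b : G → H) (π : G → H ≃ₗᵢ[ℂ] H) (hb : IsWqCocycle b π) :
    ∃ C : ℝ, ∀ g : G, ∀ z ∈ Z,
      ‖π g (b z) - π (g * (s (QuotientGroup.mk g))⁻¹) (b z)‖ ≤ C := by
  obtain ⟨D, hD⟩ := hb.defect
  obtain ⟨C, hC⟩ := hTTT H _ _ (hb.comp_section hcentral hs_borel hs_sect hs_reg hS)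
  refine ⟨4 * D + 2 * (D + C), fun g z hz => ?_⟩
  have hg : ‖b g - b (g * (s (QuotientGroup.mk g))⁻¹)‖ ≤ D + C := by
    have := norm_map_mul_sub_le hD (g * (s (QuotientGroup.mk g))⁻¹) (s (QuotientGroup.mk g))
    rw [inv_mul_cancel_right] at this
    exact this.trans (by gcongr; exact hC _)
  exact (norm_map_central_sub_map_central_le hD (hcentral hz) g _).trans (by gcongr)

/-- Let `G` be a locally compact second countable group, `Z` a closed central subgroup,
and `s : G/Z → G` a regular Borel section of the quotient map `p` with finite defect set.
Set `z_g = g·s(p(g))⁻¹ ∈ Z`. If `G/Z` has property (TTT) and `(b, π)` is a wq-cocycle on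
`G`, then `sup_{g ∈ G, z ∈ Z} ‖π(g) b(z) − π(z_g) b(z)‖ < ∞`. -/
theorem almost_central_action_on_cocycle
    (G : Type) [Group G] [TopologicalSpace G] [IsTopologicalGroup G] [T2Space G]
    [LocallyCompactSpace G] [SecondCountableTopology G]
    (Z : Subgroup G) [Z.Normal] (hcentral : Z ≤ Subgroup.center G)
    (hclosed : IsClosed (Z : Set G))
    (s : G ⧸ Z → G)
    (hs_borel : BorelMeasurableMap s)
    (hs_sect : ∀ x : G ⧸ Z, (QuotientGroup.mk (s x) : G ⧸ Z) = x)
    (hs_reg : ∀ K : Set (G ⧸ Z), IsCompact K → IsCompact (closure (s '' K)))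
    (hS : Set.Finite {w : G | ∃ x y : G ⧸ Z, w = s (x * y) * (s x * s y)⁻¹})
    (hTTT : HasTTT (G ⧸ Z))
    (H : Type) [NormedAddCommGroup H] [InnerProductSpace ℂ H] [CompleteSpace H]
    (b : G → H) (π : G → H ≃ₗᵢ[ℂ] H) (hb : IsWqCocycle b π) :
    ∃ C : ℝ, ∀ g : G, ∀ z ∈ Z,
      ‖π g (b z) - π (g * (s (QuotientGroup.mk g))⁻¹) (b z)‖ ≤ C :=
  almost_central_action_on_cocycle_general G Z hcentral s hs_borel hs_sect hs_reg hS hTTT H b π hb
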